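/- Let n ≥ k ≥ 2, let 𝔽 be a field and let S_k ⊆ C([n],k). Then the k-hyperclique complex ⟨S_k⟩ is D-perfect if and only if the simplicial matroid Sim_k^n(S_k) is superdense. -/

import Mathlib

/-!
Common definitions for simplicial matroids, following Cordovil–Lemos–Linhares Sales,
"Dirac's theorem on simplicial matroids".

We model `[n] = {1,…,n}` by `Fin n`, and a subset of `[n]` by a `Finset (Fin n)`.
A family `S_k ⊆ C([n],k)` is a `Finset (Finset (Fin n))` (all of whose members
have cardinality `k`, which is imposed by hypotheses in the theorems).
-/

open Finset

/-- The incidence number `[F' : F]`: if `F = i₁ < i₂ < ⋯ < iₘ` and `F' = F \ {iⱼ}`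
then `[F' : F] = (-1)ʲ` (with `j` the 1-based position of the deleted element),
and `[F' : F] = 0` otherwise. -/
def inc {n : ℕ} (F' F : Finset (Fin n)) : ℤ :=
  ∑ i ∈ F, if F' = F.erase i then (-1 : ℤ) ^ (F.filter (fun j => j ≤ i)).card else 0

/-- The family `C([n], m)` of `m`-element subsets of `[n]`, as a type. -/
abbrev Csets (n m : ℕ) := {F : Finset (Fin n) // F.card = m}

/-- `∂_k F`, the boundary of a single `k`-subset `F` of `[n]`,
as a vector of `𝔽^{C([n],k-1)}`. -/
def bvec (𝔽 : Type*) [Field 𝔽] (n k : ℕ) (F : Finset (Fin n)) : Csets n (k - 1) → 𝔽 :=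
  fun F' => ((inc F'.1 F : ℤ) : 𝔽)

/-- Independence in the simplicial matroid `Sim_k^n(S_k)` over `𝔽`:
`X ⊆ S_k` is independent iff the vectors `∂_k F`, `F ∈ X`, are linearly independent. -/
def SimIndep (𝔽 : Type*) [Field 𝔽] (n k : ℕ) (Sk X : Finset (Finset (Fin n))) : Prop :=
  X ⊆ Sk ∧ LinearIndependent 𝔽 (fun F : X => bvec 𝔽 n k F.1)

/-- A circuit of `Sim_k^n(S_k)`: a minimal dependent subset of the ground set. -/
def SimCircuit (𝔽 : Type*) [Field 𝔽] (n k : ℕ) (Sk C : Finset (Finset (Fin n))) : Prop :=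
  C ⊆ Sk ∧ ¬ LinearIndependent 𝔽 (fun F : C => bvec 𝔽 n k F.1) ∧
    ∀ C' ⊂ C, LinearIndependent 𝔽 (fun F : C' => bvec 𝔽 n k F.1)

/-- The rank (in `Sim_k^n`) of a set `X` of `k`-subsets of `[n]`:
the dimension of the span of the boundaries of its members. -/
noncomputable def simRank (𝔽 : Type*) [Field 𝔽] (n k : ℕ) (X : Finset (Finset (Fin n))) : ℕ :=
  Module.finrank 𝔽 (Submodule.span 𝔽 ((fun F => bvec 𝔽 n k F) '' (X : Set (Finset (Fin n)))))

/-- A cocircuit of `Sim_k^n(S_k)`, i.e. a circuit of the dual matroid: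
a minimal set `C ⊆ S_k` whose complement does not span (`X` is independent in the dual
matroid iff `r(E ∖ X) = r(E)`). -/
def SimCocircuit (𝔽 : Type*) [Field 𝔽] (n k : ℕ) (Sk C : Finset (Finset (Fin n))) : Prop :=
  C ⊆ Sk ∧ simRank 𝔽 n k (Sk \ C) < simRank 𝔽 n k Sk ∧
    ∀ C' ⊂ C, simRank 𝔽 n k (Sk \ C') = simRank 𝔽 n k Sk

/-- The boundary map `∂_k : 𝔽^{S_k} → 𝔽^{C([n],k-1)}`. -/
noncomputable def bdryMap (𝔽 : Type*) [Field 𝔽] (n k : ℕ) (Sk : Finset (Finset (Fin n))) :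
    (↥Sk → 𝔽) →ₗ[𝔽] (Csets n (k - 1) → 𝔽) :=
  Matrix.mulVecLin (Matrix.of fun (F' : Csets n (k - 1)) (F : ↥Sk) => ((inc F'.1 F.1 : ℤ) : 𝔽))

/-- The coboundary `δ^{k-1} V` of a `(k-1)`-subset `V` of `[n]`,
as a vector of `𝔽^{S_k}`; its `F`-coordinate is `[V : F]`. -/
def cobdry (𝔽 : Type*) [Field 𝔽] {n : ℕ} (Sk : Finset (Finset (Fin n)))
    (V : Finset (Fin n)) : ↥Sk → 𝔽 :=
  fun F => ((inc V F.1 : ℤ) : 𝔽)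

/-- The boundary `∂_{k+1} X` of a `(k+1)`-subset `X` of `[n]`, regarded as a vector
of `𝔽^{S_k}`; its `F`-coordinate is `[F : X]`. -/
def pbdry (𝔽 : Type*) [Field 𝔽] {n : ℕ} (Sk : Finset (Finset (Fin n)))
    (X : Finset (Fin n)) : ↥Sk → 𝔽 :=
  fun F => ((inc F.1 X : ℤ) : 𝔽)

open scoped Classical in
/-- The support of a vector of `𝔽^{S_k}`, as a set of `k`-subsets of `[n]`. -/
noncomputable def suppFin {𝔽 : Type*} [Field 𝔽] {n : ℕ} {Sk : Finset (Finset (Fin n))}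
    (v : ↥Sk → 𝔽) : Finset (Finset (Fin n)) :=
  (Sk.attach.filter fun F => v F ≠ 0).image Subtype.val

/-- `supp(δ^{k-1} V) ⊆ S_k`. -/
noncomputable def suppδ (𝔽 : Type*) [Field 𝔽] {n : ℕ} (Sk : Finset (Finset (Fin n)))
    (V : Finset (Fin n)) : Finset (Finset (Fin n)) :=
  suppFin (cobdry 𝔽 Sk V)

/-- The cocircuit space of `Sim_k^n(S_k)`: the orthogonal complement, with respect to the
standard bilinear form on `𝔽^{S_k}`, of the circuit space `ker ∂_k`. -/
noncomputable def cocircSpace (𝔽 : Type*) [Field 𝔽] (n k : ℕ) (Sk : Finset (Finset (Fin n))) :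
    Submodule 𝔽 (↥Sk → 𝔽) where
  carrier := {w | ∀ v ∈ LinearMap.ker (bdryMap 𝔽 n k Sk), ∑ F, v F * w F = 0}
  zero_mem' := by intro v hv; simp
  add_mem' := by
    intro a b ha hb v hv
    have h1 := ha v hv
    have h2 := hb v hv
    simp only [Pi.add_apply, mul_add, Finset.sum_add_distrib]
    rw [h1, h2, add_zero]
  smul_mem' := by
    intro c w hw v hv
    have h := hw v hv
    simp only [Pi.smul_apply, smul_eq_mul]
    calc ∑ F, v F * (c * w F) = ∑ F, c * (v F * w F) := by
          exact Finset.sum_congr rfl fun F _ => by ring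
      _ = c * ∑ F, v F * w F := (Finset.mul_sum _ _ _).symm
      _ = 0 := by rw [h, mul_zero]

/-- The faces of the `k`-hyperclique complex `⟨S_k⟩`: all `F ⊆ [n]` with `|F| < k`,
together with all `F` every `k`-element subset of which lies in `S_k`. -/
def IsFace {n : ℕ} (k : ℕ) (Sk : Finset (Finset (Fin n))) (F : Finset (Fin n)) : Prop :=
  F.card < k ∨ ∀ G ⊆ F, G.card = k → G ∈ Sk

/-- A facet of `⟨S_k⟩`: an inclusion-maximal face. -/
def IsFacet {n : ℕ} (k : ℕ) (Sk : Finset (Finset (Fin n))) (F : Finset (Fin n)) : Prop :=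
  IsFace k Sk F ∧ ∀ G, IsFace k Sk G → F ⊆ G → F = G

/-- `V` is simplicial in `⟨S_k⟩` if there is exactly one facet `X` of `⟨S_k⟩`
with `V ⊊ X`. -/
def SimplicialFace {n : ℕ} (k : ℕ) (Sk : Finset (Finset (Fin n))) (V : Finset (Fin n)) : Prop :=
  ∃! X, IsFacet k Sk X ∧ V ⊂ X

/-- The `k`-skeleta of the complexes `Δ_0 = ⟨S_k⟩`, `Δ_{j+1} = Δ_j ∖∖ V_j`, where
`Δ ∖∖ V = ⟨(skeleton of Δ) ∖ supp(δ^{k-1} V)⟩` (0-indexed). -/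
noncomputable def delSeq (𝔽 : Type*) [Field 𝔽] {n : ℕ} (Sk : Finset (Finset (Fin n)))
    (V : ℕ → Finset (Fin n)) : ℕ → Finset (Finset (Fin n))
  | 0 => Sk
  | j + 1 => delSeq 𝔽 Sk V j \ suppδ 𝔽 (delSeq 𝔽 Sk V j) (V j)

/-- `C*_j := supp(δ^{k-1} V_j) ∖ ⋃_{i<j} supp(δ^{k-1} V_i)` (0-indexed). -/
noncomputable def Cstar (𝔽 : Type*) [Field 𝔽] {n : ℕ} (Sk : Finset (Finset (Fin n)))
    (V : ℕ → Finset (Fin n)) (j : ℕ) : Finset (Finset (Fin n)) :=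
  suppδ 𝔽 Sk (V j) \ (Finset.range j).biUnion (fun i => suppδ 𝔽 Sk (V i))

/-- `(V_1,…,V_r)` (0-indexed: `V 0, …, V (r-1)`) is a basic linear sequence for `⟨S_k⟩`,
where `r` is the rank of `Sim_k^n(S_k)`: each `V_j` is a `(k-1)`-subset of `[n]` and each
`C*_j` is a cocircuit of `Sim_k^n(S_k(Δ_{j-1}))`. -/
def BasicLinearSeq (𝔽 : Type*) [Field 𝔽] (n k : ℕ) (Sk : Finset (Finset (Fin n))) (r : ℕ)
    (V : ℕ → Finset (Fin n)) : Prop :=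
  simRank 𝔽 n k Sk = r ∧ (∀ j < r, (V j).card = k - 1) ∧
    ∀ j < r, SimCocircuit 𝔽 n k (delSeq 𝔽 Sk V j) (Cstar 𝔽 Sk V j)

/-- `⟨S_k⟩` is D-perfect: there is a basic linear sequence `V_1,…,V_r` such that each `V_j`
is simplicial in `Δ_{j-1}`. -/
def DPerfect (𝔽 : Type*) [Field 𝔽] (n k : ℕ) (Sk : Finset (Finset (Fin n))) : Prop :=
  ∃ V : ℕ → Finset (Fin n),
    BasicLinearSeq 𝔽 n k Sk (simRank 𝔽 n k Sk) V ∧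
      ∀ j < simRank 𝔽 n k Sk, SimplicialFace k (delSeq 𝔽 Sk V j) (V j)

/-- A flat of `Sim_k^n(S_k)`: a closed subset of the ground set. -/
def SimFlat (𝔽 : Type*) [Field 𝔽] (n k : ℕ) (Sk X : Finset (Finset (Fin n))) : Prop :=
  X ⊆ Sk ∧ ∀ F ∈ Sk,
    bvec 𝔽 n k F ∈ Submodule.span 𝔽 ((fun G => bvec 𝔽 n k G) '' (X : Set (Finset (Fin n)))) →
      F ∈ X

/-- A hyperplane of `Sim_k^n(S_k)`: a flat of rank one less than the rank of the matroid. -/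
def SimHyperplane (𝔽 : Type*) [Field 𝔽] (n k : ℕ) (Sk H : Finset (Finset (Fin n))) : Prop :=
  SimFlat 𝔽 n k Sk H ∧ simRank 𝔽 n k H + 1 = simRank 𝔽 n k Sk

/-- A modular flat of `Sim_k^n(S_k)`:
`r(X) + r(Y) = r(X ∪ Y) + r(X ∩ Y)` for every flat `Y`. -/
def ModularFlat (𝔽 : Type*) [Field 𝔽] (n k : ℕ) (Sk X : Finset (Finset (Fin n))) : Prop :=
  SimFlat 𝔽 n k Sk X ∧ ∀ Y, SimFlat 𝔽 n k Sk Y →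
    simRank 𝔽 n k X + simRank 𝔽 n k Y = simRank 𝔽 n k (X ∪ Y) + simRank 𝔽 n k (X ∩ Y)

open scoped Classical in
/-- The closure of `X` in `Sim_k^n(S_k)`. -/
noncomputable def simClosure (𝔽 : Type*) [Field 𝔽] (n k : ℕ)
    (Sk X : Finset (Finset (Fin n))) : Finset (Finset (Fin n)) :=
  Sk.filter fun F =>
    bvec 𝔽 n k F ∈ Submodule.span 𝔽 ((fun G => bvec 𝔽 n k G) '' (X : Set (Finset (Fin n))))

/-- `Sim_k^n(S_k)` is supersolvable: it admits a maximal chain of modular flats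
`cl(∅) = X_0 ⊊ X_1 ⊊ ⋯ ⊊ X_r = S_k`, `r` the rank. -/
def Supersolvable (𝔽 : Type*) [Field 𝔽] (n k : ℕ) (Sk : Finset (Finset (Fin n))) : Prop :=
  ∃ X : ℕ → Finset (Finset (Fin n)),
    X 0 = simClosure 𝔽 n k Sk ∅ ∧ X (simRank 𝔽 n k Sk) = Sk ∧
      (∀ i < simRank 𝔽 n k Sk, X i ⊂ X (i + 1)) ∧
      ∀ i ≤ simRank 𝔽 n k Sk, ModularFlat 𝔽 n k Sk (X i)

/-- `H` is a dense hyperplane of `Sim_k^n(ground)`: a hyperplane of the form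
`ground ∖ supp(δ^{k-1} V)` for some `(k-1)`-subset `V` simplicial in `⟨ground⟩`. -/
def DenseHyp (𝔽 : Type*) [Field 𝔽] (n k : ℕ) (ground H : Finset (Finset (Fin n))) : Prop :=
  SimHyperplane 𝔽 n k ground H ∧
    ∃ V : Finset (Fin n), V.card = k - 1 ∧ SimplicialFace k ground V ∧
      H = ground \ suppδ 𝔽 ground V

/-- `Sim_k^n(S_k)` is superdense: there is a chain `∅ = X_0 ⊊ X_1 ⊊ ⋯ ⊊ X_r = S_k` of flats
(`r` the rank) with each `X_i` a dense hyperplane of `Sim_k^n(X_{i+1})`. -/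
def Superdense (𝔽 : Type*) [Field 𝔽] (n k : ℕ) (Sk : Finset (Finset (Fin n))) : Prop :=
  ∃ X : ℕ → Finset (Finset (Fin n)),
    X 0 = ∅ ∧ X (simRank 𝔽 n k Sk) = Sk ∧
      (∀ i ≤ simRank 𝔽 n k Sk, SimFlat 𝔽 n k Sk (X i)) ∧
      (∀ i < simRank 𝔽 n k Sk, X i ⊂ X (i + 1)) ∧
      ∀ i < simRank 𝔽 n k Sk, DenseHyp 𝔽 n k (X (i + 1)) (X i)

/-- `Sim_k^n(S_k)` is triangulable over `𝔽`: the boundaries of the `(k+1)`-faces of `⟨S_k⟩`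
span the circuit space `ker ∂_k`. -/
def Triangulable (𝔽 : Type*) [Field 𝔽] (n k : ℕ) (Sk : Finset (Finset (Fin n))) : Prop :=
  Submodule.span 𝔽
      {v : ↥Sk → 𝔽 | ∃ X : Finset (Fin n), X.card = k + 1 ∧ IsFace k Sk X ∧ v = pbdry 𝔽 Sk X}
    = LinearMap.ker (bdryMap 𝔽 n k Sk)

/-- `Sim_k^n(S_k)` is strongly triangulable over `𝔽`: there are `(k+1)`-faces `X_1,…,X_{m'}`
of `⟨S_k⟩` whose boundaries span `ker ∂_k` and such that every circuit `C` has a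
representing vector `C⃗` with support `C` which is a combination, with nonzero coefficients,
of boundaries `∂_{k+1} X_{i_j}` with `⋃_{F ∈ C} F = ⋃_j X_{i_j}`. -/
def StronglyTriangulable (𝔽 : Type*) [Field 𝔽] (n k : ℕ)
    (Sk : Finset (Finset (Fin n))) : Prop :=
  ∃ (m' : ℕ) (Xs : Fin m' → Finset (Fin n)),
    (∀ i, (Xs i).card = k + 1 ∧ IsFace k Sk (Xs i)) ∧
    Submodule.span 𝔽 (Set.range fun i => pbdry 𝔽 Sk (Xs i)) = LinearMap.ker (bdryMap 𝔽 n k Sk) ∧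
    ∀ C, SimCircuit 𝔽 n k Sk C →
      ∃ (s : ℕ) (idx : Fin s → Fin m') (a : Fin s → 𝔽) (Cv : ↥Sk → 𝔽),
        (∀ j, a j ≠ 0) ∧ suppFin Cv = C ∧
        Cv = ∑ j, a j • pbdry 𝔽 Sk (Xs (idx j)) ∧
        C.biUnion id = Finset.univ.biUnion fun j : Fin s => Xs (idx j)

/-- The simple graph `([n], S_2)`. -/
def graphOf {n : ℕ} (S2 : Finset (Finset (Fin n))) : SimpleGraph (Fin n) where
  Adj u v := u ≠ v ∧ ({u, v} : Finset (Fin n)) ∈ S2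
  symm := by
    refine ⟨fun u v h => ?_⟩
    exact ⟨h.1.symm, by rw [Finset.pair_comm]; exact h.2⟩
  loopless := by refine ⟨fun u h => ?_⟩; exact h.1 rfl

/-- A simple graph is chordal if every cycle of length at least four has a chord, i.e. an
edge of the graph joining two non-consecutive vertices of the cycle. -/
def Chordal {α : Type*} (G : SimpleGraph α) : Prop :=
  ∀ (v : α) (w : G.Walk v v), w.IsCycle → 4 ≤ w.length →
    ∃ u₁ u₂, u₁ ∈ w.support ∧ u₂ ∈ w.support ∧ G.Adj u₁ u₂ ∧ s(u₁, u₂) ∉ w.edges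
/-!
A set `C ⊆ Δ` is a cocircuit of `Sim(Δ)` exactly when `Δ ∖ C` is a hyperplane, and
`C*_j = supp(δ V_j) ∩ Δ_{j-1}`, so `Δ_j = Δ_{j-1} ∖ C*_j`. Hence a basic linear sequence of
simplicial faces is the same thing as a descending chain `S_k = Δ_0 ⊋ Δ_1 ⊋ ⋯ ⊋ Δ_r` in which each
`Δ_j` is a dense hyperplane of `Sim(Δ_{j-1})`, and such a chain read backwards is a superdense
chain. The chain ends at `Δ_r = ∅` because `Δ_r` has rank `0` while no `k`-set with `k ≥ 1` has
zero boundary.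
-/

namespace SimplicialMatroid

section Support

variable (𝔽 : Type*) [Field 𝔽] {n : ℕ}

theorem mem_suppδ_iff {Δ : Finset (Finset (Fin n))} {V F : Finset (Fin n)} :
    F ∈ suppδ 𝔽 Δ V ↔ F ∈ Δ ∧ ((inc V F : ℤ) : 𝔽) ≠ 0 := by
  classical
  simp only [suppδ, suppFin, cobdry, mem_image, Subtype.exists, exists_and_right,
    exists_eq_right]
  exact ⟨fun ⟨hF, h⟩ => ⟨hF, (mem_filter.1 h).2⟩,
    fun ⟨hF, h⟩ => ⟨hF, mem_filter.2 ⟨mem_attach _ _, h⟩⟩⟩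

theorem suppδ_subset (Δ : Finset (Finset (Fin n))) (V : Finset (Fin n)) :
    suppδ 𝔽 Δ V ⊆ Δ :=
  fun _ hF => ((mem_suppδ_iff 𝔽).1 hF).1

theorem suppδ_eq_inter_of_subset {Δ Sk : Finset (Finset (Fin n))} (h : Δ ⊆ Sk)
    (V : Finset (Fin n)) : suppδ 𝔽 Δ V = Δ ∩ suppδ 𝔽 Sk V := by
  ext F
  simp only [mem_suppδ_iff, mem_inter]
  exact ⟨fun ⟨h1, h2⟩ => ⟨h1, h h1, h2⟩, fun ⟨h1, _, h2⟩ => ⟨h1, h2⟩⟩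

variable (Sk : Finset (Finset (Fin n))) (V : ℕ → Finset (Fin n))

theorem delSeq_succ (j : ℕ) :
    delSeq 𝔽 Sk V (j + 1) = delSeq 𝔽 Sk V j \ suppδ 𝔽 (delSeq 𝔽 Sk V j) (V j) :=
  rfl

theorem delSeq_subset (j : ℕ) : delSeq 𝔽 Sk V j ⊆ Sk := by
  induction j with
  | zero => exact subset_rfl
  | succ j ih => exact sdiff_subset.trans ih

theorem delSeq_eq_sdiff_biUnion (j : ℕ) :
    delSeq 𝔽 Sk V j = Sk \ (range j).biUnion fun i => suppδ 𝔽 Sk (V i) := by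
  induction j with
  | zero => simp [delSeq]
  | succ j ih =>
    rw [delSeq_succ, suppδ_eq_inter_of_subset 𝔽 (delSeq_subset 𝔽 Sk V j), ih, range_add_one,
      biUnion_insert, sdiff_inter_self_left, sdiff_sdiff_left, sup_eq_union, union_comm]

theorem Cstar_eq_suppδ_delSeq (j : ℕ) :
    Cstar 𝔽 Sk V j = suppδ 𝔽 (delSeq 𝔽 Sk V j) (V j) := by
  rw [suppδ_eq_inter_of_subset 𝔽 (delSeq_subset 𝔽 Sk V j), delSeq_eq_sdiff_biUnion]
  ext F
  simp only [Cstar, mem_sdiff, mem_inter, mem_suppδ_iff]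
  tauto

end Support

section Rank

variable (𝔽 : Type*) [Field 𝔽] (n k : ℕ)

noncomputable def bdrySpan (X : Finset (Finset (Fin n))) :
    Submodule 𝔽 (Csets n (k - 1) → 𝔽) :=
  Submodule.span 𝔽 ((fun G => bvec 𝔽 n k G) '' (X : Set (Finset (Fin n))))

variable {n k}

theorem simRank_eq_finrank_bdrySpan (X : Finset (Finset (Fin n))) :
    simRank 𝔽 n k X = Module.finrank 𝔽 (bdrySpan 𝔽 n k X) :=
  rfl

theorem bvec_mem_bdrySpan {X : Finset (Finset (Fin n))} {F : Finset (Fin n)} (hF : F ∈ X) :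
    bvec 𝔽 n k F ∈ bdrySpan 𝔽 n k X :=
  Submodule.subset_span ⟨F, hF, rfl⟩

theorem bdrySpan_mono {X Y : Finset (Finset (Fin n))} (h : X ⊆ Y) :
    bdrySpan 𝔽 n k X ≤ bdrySpan 𝔽 n k Y :=
  Submodule.span_mono (Set.image_mono (coe_subset.2 h))

theorem bdrySpan_insert (F : Finset (Fin n)) (X : Finset (Finset (Fin n))) :
    bdrySpan 𝔽 n k (insert F X) = 𝔽 ∙ bvec 𝔽 n k F ⊔ bdrySpan 𝔽 n k X := by
  rw [bdrySpan, coe_insert, Set.image_insert_eq, Submodule.span_insert, bdrySpan]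

theorem simRank_mono {X Y : Finset (Finset (Fin n))} (h : X ⊆ Y) :
    simRank 𝔽 n k X ≤ simRank 𝔽 n k Y :=
  Submodule.finrank_mono (bdrySpan_mono 𝔽 h)

theorem simRank_insert_le (F : Finset (Fin n)) (X : Finset (Finset (Fin n))) :
    simRank 𝔽 n k (insert F X) ≤ simRank 𝔽 n k X + 1 := by
  have hline : Module.finrank 𝔽 (𝔽 ∙ bvec 𝔽 n k F) ≤ 1 :=
    (finrank_span_le_card ({bvec 𝔽 n k F} : Set _)).trans (by simp)
  rw [simRank_eq_finrank_bdrySpan, simRank_eq_finrank_bdrySpan, bdrySpan_insert]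
  have := Submodule.finrank_add_le_finrank_add_finrank (𝔽 ∙ bvec 𝔽 n k F)
    (bdrySpan 𝔽 n k X)
  omega

theorem simRank_insert_of_mem_bdrySpan {F : Finset (Fin n)} {X : Finset (Finset (Fin n))}
    (h : bvec 𝔽 n k F ∈ bdrySpan 𝔽 n k X) :
    simRank 𝔽 n k (insert F X) = simRank 𝔽 n k X := by
  rw [simRank_eq_finrank_bdrySpan, bdrySpan_insert,
    sup_eq_right.2 ((Submodule.span_singleton_le_iff_mem _ _).2 h)]
  rfl

theorem simRank_insert_of_notMem_bdrySpan {F : Finset (Fin n)} {X : Finset (Finset (Fin n))}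
    (h : bvec 𝔽 n k F ∉ bdrySpan 𝔽 n k X) :
    simRank 𝔽 n k (insert F X) = simRank 𝔽 n k X + 1 := by
  refine le_antisymm (simRank_insert_le 𝔽 F X) (Nat.succ_le_of_lt ?_)
  refine Submodule.finrank_lt_finrank_of_lt
    (lt_of_le_of_ne (bdrySpan_mono 𝔽 (subset_insert F X)) ?_)
  intro heq
  apply h
  rw [show bdrySpan 𝔽 n k X = bdrySpan 𝔽 n k (insert F X) from heq]
  exact bvec_mem_bdrySpan 𝔽 (mem_insert_self F X)

theorem bvec_ne_zero (hk : 1 ≤ k) {F : Finset (Fin n)} (hF : F.card = k) :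
    bvec 𝔽 n k F ≠ 0 := by
  obtain ⟨i, hi⟩ : F.Nonempty := card_pos.1 (by omega)
  have hcard : (F.erase i).card = k - 1 := by rw [card_erase_of_mem hi, hF]
  have hinc : inc (F.erase i) F = (-1) ^ (F.filter (· ≤ i)).card := by
    rw [inc, sum_eq_single_of_mem i hi, if_pos rfl]
    intro j _ hji
    rw [if_neg]
    intro heq
    have hij : i ∈ F.erase j := mem_erase.2 ⟨hji.symm, hi⟩
    rw [← heq] at hij
    exact (mem_erase.1 hij).1 rfl
  intro h0
  have := congrFun h0 ⟨F.erase i, hcard⟩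
  simp only [bvec, hinc, Pi.zero_apply] at this
  push_cast at this
  exact pow_ne_zero _ (neg_ne_zero.2 one_ne_zero) this

theorem eq_empty_of_simRank_eq_zero (hk : 1 ≤ k) {X : Finset (Finset (Fin n))}
    (hX : ∀ F ∈ X, F.card = k) (h : simRank 𝔽 n k X = 0) : X = ∅ := by
  rw [simRank_eq_finrank_bdrySpan, Submodule.finrank_eq_zero] at h
  refine eq_empty_iff_forall_notMem.2 fun F hF => bvec_ne_zero 𝔽 hk (hX F hF) ?_
  simpa [h] using bvec_mem_bdrySpan 𝔽 (k := k) hF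

end Rank

section Hyperplane

variable {𝔽 : Type*} [Field 𝔽] {n k : ℕ}

theorem SimCocircuit.simHyperplane_sdiff {Δ C : Finset (Finset (Fin n))}
    (h : SimCocircuit 𝔽 n k Δ C) : SimHyperplane 𝔽 n k Δ (Δ \ C) := by
  obtain ⟨hCΔ, hlt, hmin⟩ := h
  have hadd : ∀ F ∈ C, simRank 𝔽 n k (insert F (Δ \ C)) = simRank 𝔽 n k Δ := by
    intro F hF
    rw [← sdiff_erase (hCΔ hF)]
    exact hmin _ (erase_ssubset hF)
  refine ⟨⟨sdiff_subset, fun F hFΔ hspan => ?_⟩, ?_⟩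
  · by_contra hF
    have hFC : F ∈ C := by simpa [hFΔ] using hF
    rw [← hadd F hFC, simRank_insert_of_mem_bdrySpan 𝔽 hspan] at hlt
    exact lt_irrefl _ hlt
  · obtain ⟨F, hF⟩ : C.Nonempty := nonempty_iff_ne_empty.2 fun h => by simp [h] at hlt
    have := simRank_insert_le 𝔽 (k := k) F (Δ \ C)
    rw [hadd F hF] at this
    omega

theorem SimHyperplane.simCocircuit_of_sdiff {Δ C : Finset (Finset (Fin n))} (hCΔ : C ⊆ Δ)
    (h : SimHyperplane 𝔽 n k Δ (Δ \ C)) : SimCocircuit 𝔽 n k Δ C := by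
  obtain ⟨⟨-, hflat⟩, hrank⟩ := h
  refine ⟨hCΔ, by omega, fun C' hC' => ?_⟩
  obtain ⟨F, hFC, hFC'⟩ := exists_of_ssubset hC'
  have hspan : bvec 𝔽 n k F ∉ bdrySpan 𝔽 n k (Δ \ C) := fun hmem =>
    (mem_sdiff.1 (hflat F (hCΔ hFC) hmem)).2 hFC
  have hsub : insert F (Δ \ C) ⊆ Δ \ C' :=
    insert_subset (mem_sdiff.2 ⟨hCΔ hFC, hFC'⟩) (sdiff_subset_sdiff subset_rfl hC'.subset)
  have := simRank_mono 𝔽 (k := k) hsub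
  have := simRank_mono 𝔽 (k := k) (sdiff_subset (s := Δ) (t := C'))
  rw [simRank_insert_of_notMem_bdrySpan 𝔽 hspan] at *
  omega

theorem simCocircuit_iff_simHyperplane_sdiff {Δ C : Finset (Finset (Fin n))} (hCΔ : C ⊆ Δ) :
    SimCocircuit 𝔽 n k Δ C ↔ SimHyperplane 𝔽 n k Δ (Δ \ C) :=
  ⟨SimCocircuit.simHyperplane_sdiff, SimHyperplane.simCocircuit_of_sdiff hCΔ⟩

theorem SimHyperplane.ssubset {Δ H : Finset (Finset (Fin n))} (h : SimHyperplane 𝔽 n k Δ H) :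
    H ⊂ Δ :=
  ssubset_of_subset_of_ne h.1.1 fun heq => by simpa [heq] using h.2

theorem SimFlat.trans {Sk Y X : Finset (Finset (Fin n))} (hY : SimFlat 𝔽 n k Sk Y)
    (hX : SimFlat 𝔽 n k Y X) : SimFlat 𝔽 n k Sk X :=
  ⟨hX.1.trans hY.1, fun F hF hspan =>
    hX.2 F (hY.2 F hF (bdrySpan_mono 𝔽 hX.1 hspan)) hspan⟩

variable {Y : ℕ → Finset (Finset (Fin n))} {m : ℕ}

theorem simRank_add_of_hyperplane_chain (h : ∀ j < m, SimHyperplane 𝔽 n k (Y j) (Y (j + 1))) :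
    ∀ j ≤ m, simRank 𝔽 n k (Y j) + j = simRank 𝔽 n k (Y 0) := by
  intro j hj
  induction j with
  | zero => rfl
  | succ j ih =>
    have := (h j hj).2
    have := ih (by omega)
    omega

theorem simFlat_of_hyperplane_chain (h : ∀ j < m, SimHyperplane 𝔽 n k (Y j) (Y (j + 1))) :
    ∀ j ≤ m, SimFlat 𝔽 n k (Y 0) (Y j) := by
  intro j hj
  induction j with
  | zero => exact ⟨subset_rfl, fun _ hF _ => hF⟩
  | succ j ih => exact SimFlat.trans (ih (by omega)) (h j hj).1

end Hyperplane

section Chains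

variable {𝔽 : Type*} [Field 𝔽] {n k : ℕ} {Sk : Finset (Finset (Fin n))}

theorem dPerfect_iff_exists_delSeq : DPerfect 𝔽 n k Sk ↔ ∃ V : ℕ → Finset (Fin n),
    ∀ j < simRank 𝔽 n k Sk, (V j).card = k - 1 ∧
      SimplicialFace k (delSeq 𝔽 Sk V j) (V j) ∧
        SimHyperplane 𝔽 n k (delSeq 𝔽 Sk V j) (delSeq 𝔽 Sk V (j + 1)) := by
  have hcocircuit : ∀ V j, SimCocircuit 𝔽 n k (delSeq 𝔽 Sk V j) (Cstar 𝔽 Sk V j) ↔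
      SimHyperplane 𝔽 n k (delSeq 𝔽 Sk V j) (delSeq 𝔽 Sk V (j + 1)) := fun V j => by
    rw [Cstar_eq_suppδ_delSeq, delSeq_succ]
    exact simCocircuit_iff_simHyperplane_sdiff (suppδ_subset 𝔽 _ _)
  simp only [DPerfect, BasicLinearSeq, hcocircuit, true_and]
  refine exists_congr fun V => ⟨?_, ?_⟩
  · rintro ⟨⟨hcard, hhyp⟩, hsimp⟩ j hj
    exact ⟨hcard j hj, hsimp j hj, hhyp j hj⟩
  · intro h
    exact ⟨⟨fun j hj => (h j hj).1, fun j hj => (h j hj).2.2⟩, fun j hj => (h j hj).2.1⟩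

theorem superdense_iff_exists_chain :
    Superdense 𝔽 n k Sk ↔ ∃ Y : ℕ → Finset (Finset (Fin n)),
      Y 0 = Sk ∧ Y (simRank 𝔽 n k Sk) = ∅ ∧
      ∀ j < simRank 𝔽 n k Sk, DenseHyp 𝔽 n k (Y j) (Y (j + 1)) := by
  set r := simRank 𝔽 n k Sk
  have hrev : ∀ j < r, r - j = r - (j + 1) + 1 := fun j hj => by omega
  constructor
  · rintro ⟨X, hX0, hXr, -, -, hdense⟩
    refine ⟨fun j => X (r - j), by simpa using hXr, by simpa using hX0, fun j hj => ?_⟩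
    simpa only [hrev j hj] using hdense (r - (j + 1)) (by omega)
  · rintro ⟨Y, hY0, hYr, hdense⟩
    have hchain : ∀ j < r, SimHyperplane 𝔽 n k (Y j) (Y (j + 1)) := fun j hj => (hdense j hj).1
    refine ⟨fun i => Y (r - i), by simpa using hYr, by simpa [r] using hY0,
      fun i hi => ?_, fun i hi => ?_, fun i hi => ?_⟩
    · simpa only [hY0] using simFlat_of_hyperplane_chain hchain (r - i) (by omega)
    · simpa only [hrev i hi] using SimHyperplane.ssubset (hchain (r - (i + 1)) (by omega))
    · simpa only [hrev i hi] using hdense (r - (i + 1)) (by omega)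

theorem delSeq_simRank_eq_empty (hk : 1 ≤ k) (hSk : ∀ F ∈ Sk, F.card = k)
    {V : ℕ → Finset (Fin n)} (h : ∀ j < simRank 𝔽 n k Sk,
      SimHyperplane 𝔽 n k (delSeq 𝔽 Sk V j) (delSeq 𝔽 Sk V (j + 1))) :
    delSeq 𝔽 Sk V (simRank 𝔽 n k Sk) = ∅ := by
  refine eq_empty_of_simRank_eq_zero 𝔽 hk (fun F hF => hSk F (delSeq_subset 𝔽 Sk V _ hF)) ?_
  have := simRank_add_of_hyperplane_chain h _ le_rfl
  simp only [delSeq] at this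
  omega

theorem exists_delSeq_of_denseHyp_chain {Y : ℕ → Finset (Finset (Fin n))} {m : ℕ}
    (hY0 : Y 0 = Sk) (hY : ∀ j < m, DenseHyp 𝔽 n k (Y j) (Y (j + 1))) :
    ∃ V : ℕ → Finset (Fin n), ∀ j < m, (V j).card = k - 1 ∧
      SimplicialFace k (delSeq 𝔽 Sk V j) (V j) ∧
        SimHyperplane 𝔽 n k (delSeq 𝔽 Sk V j) (delSeq 𝔽 Sk V (j + 1)) := by
  have hwitness : ∀ j, ∃ V : Finset (Fin n), j < m →
      V.card = k - 1 ∧ SimplicialFace k (Y j) V ∧ Y (j + 1) = Y j \ suppδ 𝔽 (Y j) V := by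
    intro j
    by_cases hj : j < m
    · obtain ⟨-, V, hV⟩ := hY j hj
      exact ⟨V, fun _ => hV⟩
    · exact ⟨∅, fun h => absurd h hj⟩
  choose V hV using hwitness
  have hdelSeq : ∀ j ≤ m, delSeq 𝔽 Sk V j = Y j := by
    intro j hj
    induction j with
    | zero => exact hY0.symm
    | succ j ih => rw [delSeq_succ, ih (by omega), ← (hV j hj).2.2]
  refine ⟨V, fun j hj => ?_⟩
  rw [hdelSeq j hj.le, hdelSeq (j + 1) hj]
  exact ⟨(hV j hj).1, (hV j hj).2.1, (hY j hj).1⟩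

end Chains

end SimplicialMatroid

open SimplicialMatroid

theorem stmt10_general (𝔽 : Type*) [Field 𝔽] (n k : ℕ) (hk : 2 ≤ k)
    (Sk : Finset (Finset (Fin n))) (hSk : ∀ F ∈ Sk, F.card = k) :
    DPerfect 𝔽 n k Sk ↔ Superdense 𝔽 n k Sk := by
  rw [dPerfect_iff_exists_delSeq, superdense_iff_exists_chain]
  constructor
  · rintro ⟨V, hV⟩
    refine ⟨delSeq 𝔽 Sk V, rfl,
      delSeq_simRank_eq_empty (by omega) hSk fun j hj => (hV j hj).2.2, fun j hj => ?_⟩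
    exact ⟨(hV j hj).2.2, V j, (hV j hj).1, (hV j hj).2.1, delSeq_succ 𝔽 Sk V j⟩
  · rintro ⟨Y, hY0, -, hY⟩
    exact exists_delSeq_of_denseHyp_chain hY0 hY

theorem stmt10 (𝔽 : Type*) [Field 𝔽] (n k : ℕ) (hk : 2 ≤ k) (hkn : k ≤ n)
    (Sk : Finset (Finset (Fin n))) (hSk : ∀ F ∈ Sk, F.card = k) :
    DPerfect 𝔽 n k Sk ↔ Superdense 𝔽 n k Sk :=
  stmt10_general 𝔽 n k hk Sk hSk
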